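/- Let G and H be finite simple graphs (the case G = H is allowed) and run color refinement on their disjoint union with the uniform initial coloring. Then for every x ∈ V(G), x' ∈ V(H) and every nonnegative integer k: if w_k^G(x) ≠ w_k^H(x'), then C_k(x) ≠ C_k(x'). Equivalently, C_k(x) = C_k(x') implies w_k^G(x) = w_k^H(x'). -/

import Mathlib

/-- The type of colors produced after `k` rounds of color refinement. -/
def CRColor : ℕ → Type
  | 0 => Unit
  | k + 1 => CRColor k × Multiset (CRColor k)

/-- The color refinement coloring after `k` rounds: `C 0` is constant, and
`C (k+1) x = (C k x, {{C k y : y ∈ N(x)}})`. -/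
noncomputable def crColoring {V : Type*} [Fintype V] (G : SimpleGraph V) :
    (k : ℕ) → V → CRColor k
  | 0 => fun _ => ()
  | k + 1 => fun x =>
      (crColoring G k x, ((G.neighborSet x).toFinite.toFinset.val).map (crColoring G k))

/-- `walkCount G k x` is the number of walks of length `k` in `G` starting at `x`. -/
noncomputable def walkCount {V : Type*} (G : SimpleGraph V) (k : ℕ) (x : V) : ℕ :=
  Nat.card {p : (y : V) × G.Walk x y // p.2.length = k}

/-! A walk of length `k + 1` from `x` is an edge to a neighbour `z` followed by a walk of length
`k` from `z`, so `w_{k+1}(x) = ∑_{z ∼ x} w_k(z)`. By induction `w_k` is therefore a function of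
the colour `C_k`: `C_{k+1}(x)` contains the multiset of neighbour colours `C_k(z)`, and summing
`w_k` over it gives `w_{k+1}(x)`. Walk counts in `G ⊕g H` at `inl x` and `inr x'` are those of
`G` at `x` and of `H` at `x'`, since the neighbourhood of `inl x` is the image of that of `x`. -/

namespace SimpleGraph

variable {V : Type*} (G : SimpleGraph V)

abbrev WalksFrom (x : V) (k : ℕ) : Type _ := {p : (y : V) × G.Walk x y // p.2.length = k}

instance (x : V) : Unique (G.WalksFrom x 0) where
  default := ⟨⟨x, .nil⟩, rfl⟩
  uniq := by
    rintro ⟨⟨_, _ | _⟩, h⟩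
    · rfl
    · simp at h

def walksFromSuccEquiv (x : V) (k : ℕ) :
    G.WalksFrom x (k + 1) ≃ (z : G.neighborSet x) × G.WalksFrom z k where
  toFun
    | ⟨⟨y, .cons h w⟩, hl⟩ => ⟨⟨_, h⟩, ⟨⟨y, w⟩, by simpa using hl⟩⟩
  invFun q := ⟨⟨q.2.1.1, .cons q.1.2 q.2.1.2⟩, congrArg Nat.succ q.2.2⟩
  left_inv := by rintro ⟨⟨y, _ | ⟨h, w⟩⟩, hl⟩ <;> simp at hl ⊢
  right_inv _ := rfl

instance finite_walksFrom [Finite V] (x : V) (k : ℕ) : Finite (G.WalksFrom x k) := by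
  induction k generalizing x with
  | zero => infer_instance
  | succ k ih => exact Finite.of_equiv _ (G.walksFromSuccEquiv x k).symm

end SimpleGraph

open SimpleGraph

section

variable {V : Type*} (G : SimpleGraph V)

theorem walkCount_zero (x : V) : walkCount G 0 x = 1 :=
  Nat.card_unique (α := G.WalksFrom x 0)

theorem walkCount_succ [Finite V] (x : V) (k : ℕ) :
    walkCount G (k + 1) x = ∑ z ∈ (G.neighborSet x).toFinite.toFinset, walkCount G k z := by
  have := Fintype.ofFinite (G.neighborSet x)
  rw [walkCount, Nat.card_congr (G.walksFromSuccEquiv x k), Nat.card_sigma]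
  exact (Finset.sum_subtype _ (fun _ => Set.Finite.mem_toFinset _) (walkCount G k)).symm

theorem walkCount_map_of_neighborSet_eq {W : Type*} [Finite V] [Finite W] {G' : SimpleGraph W}
    {f : V → W} (hf : f.Injective) (hN : ∀ v, G'.neighborSet (f v) = f '' G.neighborSet v)
    (k : ℕ) (v : V) : walkCount G' k (f v) = walkCount G k v := by
  classical
  induction k generalizing v with
  | zero => simp only [walkCount_zero]
  | succ k ih =>
    have hImage : (G'.neighborSet (f v)).toFinite.toFinset =
        (G.neighborSet v).toFinite.toFinset.image f := by
      ext; simp [hN]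
    rw [walkCount_succ, walkCount_succ, hImage, Finset.sum_image hf.injOn]
    exact Finset.sum_congr rfl fun z _ => ih z

def walkCountOfCRColor : (k : ℕ) → CRColor k → ℕ
  | 0, _ => 1
  | k + 1, (_, neighborColors) => (neighborColors.map (walkCountOfCRColor k)).sum

theorem walkCountOfCRColor_crColoring [Fintype V] (k : ℕ) (x : V) :
    walkCountOfCRColor k (crColoring G k x) = walkCount G k x := by
  induction k generalizing x with
  | zero => exact (walkCount_zero G x).symm
  | succ k ih =>
    rw [walkCount_succ, Finset.sum_eq_multiset_sum]
    simp only [crColoring, walkCountOfCRColor, Multiset.map_map]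
    exact congrArg Multiset.sum (Multiset.map_congr rfl fun z _ => ih z)

theorem walkCount_eq_of_crColoring_eq [Fintype V] {k : ℕ} {x y : V}
    (h : crColoring G k x = crColoring G k y) : walkCount G k x = walkCount G k y := by
  rw [← walkCountOfCRColor_crColoring, h, walkCountOfCRColor_crColoring]

end

/-- Run color refinement on the disjoint union of graphs `G` and `H` (possibly equal).
For vertices `x` of `G` and `x'` of `H` and any `k`: if the walk counts `w_k` of `x` in
`G` and of `x'` in `H` differ, then their colors `C_k` differ; equivalently
`C_k(x) = C_k(x')` implies `w_k^G(x) = w_k^H(x')`. -/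
theorem walkCount_ne_implies_crColoring_ne
    {α β : Type} [Fintype α] [Fintype β] (G : SimpleGraph α) (H : SimpleGraph β)
    (x : α) (x' : β) (k : ℕ) :
    (walkCount G k x ≠ walkCount H k x' →
      crColoring (G ⊕g H) k (Sum.inl x) ≠ crColoring (G ⊕g H) k (Sum.inr x')) ∧
    (crColoring (G ⊕g H) k (Sum.inl x) = crColoring (G ⊕g H) k (Sum.inr x') →
      walkCount G k x = walkCount H k x') := by
  have walkCount_eq : crColoring (G ⊕g H) k (.inl x) = crColoring (G ⊕g H) k (.inr x') →
      walkCount G k x = walkCount H k x' := fun h => by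
    rw [← walkCount_map_of_neighborSet_eq G (G' := G ⊕g H) Sum.inl_injective neighborSet_sum_inl,
      ← walkCount_map_of_neighborSet_eq H (G' := G ⊕g H) Sum.inr_injective neighborSet_sum_inr]
    exact walkCount_eq_of_crColoring_eq _ h
  exact ⟨mt walkCount_eq, walkCount_eq⟩
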